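/- arXiv:2005.03725 — 3 statements merged into one kernel-verified Lean document; each statement's English description precedes it below -/
import Mathlib

section
/- Let X_1,...,X_n be distinct real numbers partitioned into nulls H0 and signals H1 = H0^c, let k ∈ {1,...,n}, ℓ ∈ {1,...,k}, with |H0| ≥ ℓ and |H1| ≥ k - ℓ + 1. If the ℓ-th largest null value strictly exceeds the (k-ℓ+1)-th largest signal value, then the set I = {i : X_i ≥ A_(ℓ)} (where A_(ℓ) is the ℓ-th largest null value) has cardinality at most k and contains exactly ℓ nulls. -/
/-! A value `X i` is at least the `ℓ`-th largest null `A` exactly for the `ℓ` largest nulls, and,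
since `A` exceeds the `(k - ℓ + 1)`-th largest signal, only for signals among the `k - ℓ` largest
ones. Both counts come from reading off a strictly increasing list: the entries `≥ l[t]` form
`l.drop t` and those `> l[t]` form `l.drop (t + 1)`. -/

/-- The `k`-th largest element of a multiset of reals (junk value `0` if out of range). -/
noncomputable def kthLargest (s : Multiset ℝ) (k : ℕ) : ℝ :=
  (s.sort (· ≤ ·)).getD (Multiset.card s - k) 0

namespace List

variable {α : Type*} [LinearOrder α] {l : List α} {t : ℕ}

lemma pairwise_lt_split_getElem (hl : l.Pairwise (· < ·)) (ht : t < l.length) :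
    (∀ x ∈ l.take t, x < l[t]) ∧ ∀ y ∈ l.drop (t + 1), l[t] < y := by
  rw [← take_append_drop t l, drop_eq_getElem_cons ht, pairwise_append, pairwise_cons] at hl
  exact ⟨fun x hx => hl.2.2 x hx _ mem_cons_self, hl.2.1.1⟩

lemma filter_getElem_le_eq_drop (hl : l.Pairwise (· < ·)) (ht : t < l.length) :
    l.filter (fun x => l[t] ≤ x) = l.drop t := by
  obtain ⟨hbelow, habove⟩ := pairwise_lt_split_getElem hl ht
  have hsplit := drop_eq_getElem_cons ht ▸ (take_append_drop t l).symm
  generalize ha : l[t] = a at hbelow habove hsplit ⊢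
  conv_lhs => rw [hsplit]
  rw [filter_append, filter_eq_nil_iff.mpr (fun x hx => by simpa using hbelow x hx),
    filter_cons_of_pos (by simp), filter_eq_self.mpr (fun y hy => by simpa using (habove y hy).le),
    nil_append, ← ha, drop_eq_getElem_cons ht]

lemma filter_getElem_lt_eq_drop (hl : l.Pairwise (· < ·)) (ht : t < l.length) :
    l.filter (fun x => l[t] < x) = l.drop (t + 1) := by
  obtain ⟨hbelow, habove⟩ := pairwise_lt_split_getElem hl ht
  have hsplit := drop_eq_getElem_cons ht ▸ (take_append_drop t l).symm
  generalize l[t] = a at hbelow habove hsplit ⊢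
  conv_lhs => rw [hsplit]
  rw [filter_append, filter_eq_nil_iff.mpr (fun x hx => by simpa using (hbelow x hx).le),
    filter_cons_of_neg (by simp), filter_eq_self.mpr (fun y hy => by simpa using habove y hy),
    nil_append]

end List

lemma Multiset.card_filter_eq_length_filter_sort {α : Type*} [LinearOrder α] (s : Multiset α)
    (p : α → Prop) [DecidablePred p] :
    Multiset.card (s.filter p) = ((s.sort (· ≤ ·)).filter p).length := by
  conv_lhs => rw [← Multiset.sort_eq s (· ≤ ·)]
  rw [Multiset.filter_coe, Multiset.coe_card]

lemma Multiset.pairwise_lt_sort_of_nodup {α : Type*} [LinearOrder α] {s : Multiset α}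
    (hs : s.Nodup) : (s.sort (· ≤ ·)).Pairwise (· < ·) :=
  have hnd : (s.sort (· ≤ ·)).Nodup := by rwa [← Multiset.coe_nodup, Multiset.sort_eq]
  ((s.pairwise_sort _).and hnd).imp fun h => lt_of_le_of_ne h.1 h.2

section kthLargest

variable {s : Multiset ℝ} {j : ℕ}

lemma kthLargest_eq_getElem (hj1 : 1 ≤ j) (hjs : j ≤ Multiset.card s) :
    kthLargest s j = (s.sort (· ≤ ·))[Multiset.card s - j]'(by simp; omega) :=
  List.getD_eq_getElem _ _ _

lemma card_filter_kthLargest_le (hs : s.Nodup) (hj1 : 1 ≤ j) (hjs : j ≤ Multiset.card s) :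
    Multiset.card (s.filter (kthLargest s j ≤ ·)) = j := by
  rw [Multiset.card_filter_eq_length_filter_sort, kthLargest_eq_getElem hj1 hjs,
    List.filter_getElem_le_eq_drop (Multiset.pairwise_lt_sort_of_nodup hs), List.length_drop,
    Multiset.length_sort]
  omega

lemma card_filter_kthLargest_lt (hs : s.Nodup) (hj1 : 1 ≤ j) (hjs : j ≤ Multiset.card s) :
    Multiset.card (s.filter (kthLargest s j < ·)) = j - 1 := by
  rw [Multiset.card_filter_eq_length_filter_sort, kthLargest_eq_getElem hj1 hjs,
    List.filter_getElem_lt_eq_drop (Multiset.pairwise_lt_sort_of_nodup hs), List.length_drop,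
    Multiset.length_sort]
  omega

end kthLargest

lemma Finset.card_filter_comp_eq_card_filter_map {ι α : Type*} (f : ι → α) (S : Finset ι)
    (p : α → Prop) [DecidablePred p] :
    (S.filter (fun i => p (f i))).card = Multiset.card ((S.val.map f).filter p) := by
  rw [Multiset.filter_map, Multiset.card_map]
  rfl

theorem top_set_card_and_null_count_general {n : ℕ} (X : Fin n → ℝ)
    (hX : Function.Injective X) (H0 : Finset (Fin n)) (k ℓ : ℕ)
    (hℓ1 : 1 ≤ ℓ) (hℓk : ℓ ≤ k)
    (hH0 : ℓ ≤ H0.card) (hH1 : k - ℓ + 1 ≤ H0ᶜ.card)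
    (hcmp : kthLargest (H0ᶜ.val.map X) (k - ℓ + 1) < kthLargest (H0.val.map X) ℓ) :
    (Finset.univ.filter (fun i => kthLargest (H0.val.map X) ℓ ≤ X i)).card ≤ k ∧
      ((Finset.univ.filter (fun i => kthLargest (H0.val.map X) ℓ ≤ X i)) ∩ H0).card = ℓ := by
  set A := kthLargest (H0.val.map X) ℓ
  set B := kthLargest (H0ᶜ.val.map X) (k - ℓ + 1)
  set I := Finset.univ.filter (fun i => A ≤ X i)
  have hnulls : (I ∩ H0).card = ℓ := by
    rw [Finset.filter_inter, Finset.univ_inter, Finset.card_filter_comp_eq_card_filter_map]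
    exact card_filter_kthLargest_le (H0.nodup.map hX) hℓ1 (by simpa using hH0)
  have hsignals : (I \ H0).card ≤ k - ℓ := by
    have hsub : I \ H0 ⊆ H0ᶜ.filter (fun i => B < X i) := fun i hi => by
      simp only [Finset.mem_sdiff, Finset.mem_filter, Finset.mem_univ, true_and, I] at hi
      exact Finset.mem_filter.mpr ⟨Finset.mem_compl.mpr hi.2, hcmp.trans_le hi.1⟩
    calc (I \ H0).card ≤ (H0ᶜ.filter (fun i => B < X i)).card := Finset.card_le_card hsub
      _ = k - ℓ := by
        rw [Finset.card_filter_comp_eq_card_filter_map,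
          card_filter_kthLargest_lt (H0ᶜ.nodup.map hX) (by omega) (by simpa using hH1)]
        omega
  refine ⟨?_, hnulls⟩
  rw [← Finset.card_inter_add_card_sdiff I H0]
  omega

/-- If the `ℓ`-th largest null value strictly exceeds the `(k-ℓ+1)`-th largest signal value,
then the set `I = {i : X i ≥ A_(ℓ)}` has cardinality at most `k` and contains exactly `ℓ`
nulls. -/
theorem top_set_card_and_null_count {n : ℕ} (X : Fin n → ℝ)
    (hX : Function.Injective X) (H0 : Finset (Fin n)) (k ℓ : ℕ)
    (hk1 : 1 ≤ k) (hkn : k ≤ n) (hℓ1 : 1 ≤ ℓ) (hℓk : ℓ ≤ k)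
    (hH0 : ℓ ≤ H0.card) (hH1 : k - ℓ + 1 ≤ H0ᶜ.card)
    (hcmp : kthLargest (H0ᶜ.val.map X) (k - ℓ + 1) < kthLargest (H0.val.map X) ℓ) :
    (Finset.univ.filter (fun i => kthLargest (H0.val.map X) ℓ ≤ X i)).card ≤ k ∧
      ((Finset.univ.filter (fun i => kthLargest (H0.val.map X) ℓ ≤ X i)) ∩ H0).card = ℓ :=
  top_set_card_and_null_count_general X hX H0 k ℓ hℓ1 hℓk hH0 hH1 hcmp
end

section
/- Let V₁,...,V_n be i.i.d. standard exponential random variables, ℓ ≥ 1 an integer, and ε ∈ (0,1). Then P[V_(ℓ+1) ≤ log((n/ℓ)·(1 + 4·log(3/ε))^{-1})] ≤ ε/3, where V_(ℓ+1) is the (ℓ+1)-th largest value. -/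
open MeasureTheory ProbabilityTheory Set
open scoped Finset ENNReal

theorem List.Pairwise.length_filter_lt_le {l : List ℝ} (hl : l.Pairwise (· ≤ ·)) {j : ℕ}
    (hj : j < l.length) {t : ℝ} (ht : l[j] ≤ t) :
    (l.filter (t < ·)).length ≤ l.length - (j + 1) := by
  have htake : (l.take (j + 1)).filter (t < ·) = [] := by
    refine List.filter_eq_nil_iff.mpr fun x hx => ?_
    obtain ⟨i, hi, rfl⟩ := List.mem_take_iff_getElem.mp hx
    have hij : l[i] ≤ l[j] :=
      hl.rel_get_of_le (a := ⟨i, by omega⟩) (b := ⟨j, hj⟩) (Fin.mk_le_mk.mpr (by omega))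
    simpa using hij.trans ht
  calc (l.filter (t < ·)).length = ((l.drop (j + 1)).filter (t < ·)).length := by
        conv_lhs => rw [← List.take_append_drop (j + 1) l]
        rw [List.filter_append, htake, List.nil_append]
    _ ≤ (l.drop (j + 1)).length := List.length_filter_le _ _
    _ = l.length - (j + 1) := List.length_drop

theorem Multiset.card_filter_lt_le_of_kthLargest_le {s : Multiset ℝ} {k : ℕ}
    (hk : k < Multiset.card s) {t : ℝ} (h : kthLargest s (k + 1) ≤ t) :
    Multiset.card (s.filter (t < ·)) ≤ k := by
  have hlen : (s.sort (· ≤ ·)).length = Multiset.card s := Multiset.length_sort _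
  have hj : Multiset.card s - (k + 1) < (s.sort (· ≤ ·)).length := by omega
  rw [kthLargest, List.getD_eq_getElem _ _ hj] at h
  have := (Multiset.pairwise_sort s (· ≤ ·)).length_filter_lt_le hj h
  rw [← Multiset.sort_eq s (· ≤ ·), Multiset.filter_coe, Multiset.coe_card]
  omega

theorem card_lt_le_of_kthLargest_le {ι : Type*} [Fintype ι] {x : ι → ℝ} {k : ℕ}
    (hk : k < Fintype.card ι) {t : ℝ} (h : kthLargest (Finset.univ.val.map x) (k + 1) ≤ t) :
    #{i | t < x i} ≤ k := by
  have := Multiset.card_filter_lt_le_of_kthLargest_le (by simpa using hk) h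
  rwa [Multiset.filter_map, Multiset.card_map] at this

section ChernoffExceedances
variable {Ω ι : Type*} [MeasurableSpace Ω] {μ : Measure Ω} [Fintype ι]
  {V : ι → Ω → ℝ} {ν : Measure ℝ}

theorem measure_card_lt_le_le_two_pow_mul (hV : ∀ i, Measurable (V i)) (hindep : iIndepFun V μ)
    (hν : ∀ i, μ.map (V i) = ν) (t : ℝ) (k : ℕ) :
    μ {ω | #{i | t < V i ω} ≤ k} ≤ 2 ^ k * (ν (Iic t) + 2⁻¹ * ν (Ioi t)) ^ Fintype.card ι := by
  set w : ℝ → ℝ≥0∞ := fun x => if t < x then 2⁻¹ else 1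
  have hw : Measurable w := Measurable.ite measurableSet_Ioi measurable_const measurable_const
  have hprod (ω : Ω) : ∏ i, w (V i ω) = 2⁻¹ ^ #{i | t < V i ω} := by
    simp [w, Finset.prod_ite]
  have hint : ∫⁻ x, w x ∂ν = ν (Iic t) + 2⁻¹ * ν (Ioi t) := by
    rw [← lintegral_add_compl w (measurableSet_Ioi : MeasurableSet (Ioi t)), add_comm, compl_Ioi,
      setLIntegral_congr_fun (f := w) measurableSet_Ioi (g := fun _ => 2⁻¹)
        fun x hx => if_pos hx,
      setLIntegral_congr_fun (f := w) measurableSet_Iic (g := fun _ => 1)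
        fun x hx => if_neg (not_lt.mpr hx),
      setLIntegral_const, setLIntegral_const, one_mul]
  have hone {ω} (hω : #{i | t < V i ω} ≤ k) : 1 ≤ 2 ^ k * ∏ i, w (V i ω) := by
    calc (1 : ℝ≥0∞) = 2 ^ k * 2⁻¹ ^ k := by
          rw [← mul_pow, ENNReal.mul_inv_cancel two_ne_zero ENNReal.ofNat_ne_top, one_pow]
      _ ≤ 2 ^ k * ∏ i, w (V i ω) := by
          rw [hprod]
          exact mul_le_mul_right (pow_le_pow_right_of_le_one' (by norm_num) hω) _
  calc μ {ω | #{i | t < V i ω} ≤ k} ≤ μ {ω | 1 ≤ 2 ^ k * ∏ i, w (V i ω)} :=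
        measure_mono fun ω => hone
    _ ≤ ∫⁻ ω, 2 ^ k * ∏ i, w (V i ω) ∂μ := by
        simpa using mul_meas_ge_le_lintegral₀ (by fun_prop) 1
    _ = 2 ^ k * ∏ i, ∫⁻ ω, w (V i ω) ∂μ := by
        rw [lintegral_const_mul _ (by fun_prop),
          lintegral_prod_eq_prod_lintegral_of_indepFun _ (fun i ω => w (V i ω))
            (hindep.comp _ fun _ => hw) fun i => hw.comp (hV i)]
    _ = 2 ^ k * (ν (Iic t) + 2⁻¹ * ν (Ioi t)) ^ Fintype.card ι := by
        simp_rw [← lintegral_map hw (hV _), hν, hint, Finset.prod_const, Finset.card_univ]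

theorem measure_card_lt_le_eq_zero_of_measure_Iic (hV : ∀ i, Measurable (V i))
    (hν : ∀ i, μ.map (V i) = ν)
    {t : ℝ} (ht : ν (Iic t) = 0) {k : ℕ} (hk : k < Fintype.card ι) :
    μ {ω | #{i | t < V i ω} ≤ k} = 0 := by
  refine measure_mono_null (t := ⋃ i, V i ⁻¹' Iic t) (fun ω hω => ?_) <|
    measure_iUnion_null fun i => by rw [← Measure.map_apply (hV i) measurableSet_Iic, hν, ht]
  by_contra hnot
  simp only [mem_iUnion, mem_preimage, mem_Iic, not_exists, not_le] at hnot
  have hcard : #{i | t < V i ω} ≤ k := hω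
  rw [Finset.filter_true_of_mem fun i _ => hnot i, Finset.card_univ] at hcard
  omega
end ChernoffExceedances

lemma expMeasure_Iic_of_neg {r t : ℝ} (hr : 0 < r) (ht : t < 0) : expMeasure r (Iic t) = 0 := by
  have := isProbabilityMeasure_expMeasure hr
  rw [← ofReal_cdf, cdf_expMeasure_eq hr, if_neg (not_le.mpr ht), ENNReal.ofReal_zero]

lemma expMeasure_Iic_of_nonneg {r t : ℝ} (hr : 0 < r) (ht : 0 ≤ t) :
    expMeasure r (Iic t) = ENNReal.ofReal (1 - Real.exp (-(r * t))) := by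
  have := isProbabilityMeasure_expMeasure hr
  rw [← ofReal_cdf, cdf_expMeasure_eq hr, if_pos ht]

lemma expMeasure_Ioi_of_nonneg {r t : ℝ} (hr : 0 < r) (ht : 0 ≤ t) :
    expMeasure r (Ioi t) = ENNReal.ofReal (Real.exp (-(r * t))) := by
  have := isProbabilityMeasure_expMeasure hr
  have : Real.exp (-(r * t)) ≤ 1 := Real.exp_le_one_iff.mpr (by nlinarith)
  rw [← compl_Iic, prob_compl_eq_one_sub measurableSet_Iic, expMeasure_Iic_of_nonneg hr ht,
    ← ENNReal.ofReal_one, ← ENNReal.ofReal_sub _ (by linarith), sub_sub_cancel]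

theorem measure_card_lt_le_le_of_map_eq_expMeasure {Ω ι : Type*} [MeasurableSpace Ω]
    {μ : Measure Ω} [Fintype ι] {V : ι → Ω → ℝ} (hV : ∀ i, Measurable (V i))
    (hindep : iIndepFun V μ) {r : ℝ} (hr : 0 < r) (hexp : ∀ i, μ.map (V i) = expMeasure r)
    {t : ℝ} (ht : 0 ≤ t) (k : ℕ) :
    μ {ω | #{i | t < V i ω} ≤ k} ≤
      ENNReal.ofReal (2 ^ k * (1 - Real.exp (-(r * t)) / 2) ^ Fintype.card ι) := by
  have hp : Real.exp (-(r * t)) ≤ 1 := Real.exp_le_one_iff.mpr (by nlinarith)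
  have hweight : expMeasure r (Iic t) + 2⁻¹ * expMeasure r (Ioi t) =
      ENNReal.ofReal (1 - Real.exp (-(r * t)) / 2) := by
    rw [expMeasure_Iic_of_nonneg hr ht, expMeasure_Ioi_of_nonneg hr ht,
      ← ENNReal.ofReal_ofNat 2, ← ENNReal.ofReal_inv_of_pos two_pos,
      ← ENNReal.ofReal_mul (by norm_num), ← ENNReal.ofReal_add (by linarith) (by positivity)]
    ring_nf
  calc μ {ω | #{i | t < V i ω} ≤ k}
      ≤ 2 ^ k * (expMeasure r (Iic t) + 2⁻¹ * expMeasure r (Ioi t)) ^ Fintype.card ι :=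
        measure_card_lt_le_le_two_pow_mul hV hindep hexp t k
    _ = ENNReal.ofReal (2 ^ k * (1 - Real.exp (-(r * t)) / 2) ^ Fintype.card ι) := by
        rw [hweight, ENNReal.ofReal_mul (by positivity), ENNReal.ofReal_pow zero_le_two,
          ENNReal.ofReal_ofNat, ENNReal.ofReal_pow (by linarith)]

lemma two_pow_mul_one_sub_half_pow_le_exp_neg {n ℓ : ℕ} {p L : ℝ} (hℓ : 1 ≤ ℓ) (hL : 1 / 2 ≤ L)
    (hp : p ≤ 2) (hnp : n * p = ℓ * (1 + 4 * L)) :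
    2 ^ ℓ * (1 - p / 2) ^ n ≤ Real.exp (-L) := by
  have hpow : (1 - p / 2) ^ n ≤ Real.exp (-(n * p / 2)) :=
    calc (1 - p / 2) ^ n ≤ Real.exp (-(p / 2)) ^ n :=
          pow_le_pow_left₀ (by linarith) (by linarith [Real.add_one_le_exp (-(p / 2))]) n
      _ = Real.exp (-(n * p / 2)) := by rw [← Real.exp_nat_mul]; ring_nf
  have htwo : (2 : ℝ) ^ ℓ ≤ Real.exp ℓ := by
    rw [← Real.exp_one_rpow, Real.rpow_natCast]
    exact pow_le_pow_left₀ zero_le_two (by linarith [Real.add_one_le_exp 1]) ℓ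
  have hℓ' : (1 : ℝ) ≤ ℓ := by exact_mod_cast hℓ
  calc 2 ^ ℓ * (1 - p / 2) ^ n ≤ Real.exp ℓ * Real.exp (-(n * p / 2)) :=
        mul_le_mul htwo hpow (pow_nonneg (by linarith) n) (Real.exp_nonneg _)
    _ = Real.exp (ℓ - n * p / 2) := by rw [← Real.exp_add]; ring_nf
    _ ≤ Real.exp (-L) := Real.exp_le_exp.mpr (by rw [hnp]; nlinarith)

/-- For i.i.d. standard exponentials, `ℓ ≥ 1` and `ε ∈ (0,1)`:
`P[V_(ℓ+1) ≤ log((n/ℓ)·(1 + 4 log(3/ε))⁻¹)] ≤ ε/3`. -/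
theorem exponential_order_stat_eps_bound {Ω : Type*} [MeasurableSpace Ω]
    (μ : Measure Ω) [IsProbabilityMeasure μ] {n : ℕ}
    (V : Fin n → Ω → ℝ) (hVmeas : ∀ i, Measurable (V i))
    (hindep : iIndepFun V μ)
    (hexp : ∀ i, μ.map (V i) = expMeasure 1)
    (ℓ : ℕ) (hℓ : 1 ≤ ℓ) (hℓn : ℓ + 1 ≤ n) (ε : ℝ) (hε : ε ∈ Set.Ioo (0:ℝ) 1) :
    μ {ω | kthLargest (Finset.univ.val.map fun i => V i ω) (ℓ + 1) ≤
        Real.log (((n : ℝ) / ℓ) * (1 + 4 * Real.log (3 / ε))⁻¹)} ≤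
      ENNReal.ofReal (ε / 3) := by
  obtain ⟨hε0, hε1⟩ := hε
  set L := Real.log (3 / ε)
  have hL : 1 / 2 ≤ L :=
    calc (1 / 2 : ℝ) ≤ Real.log 2 := by linarith [Real.log_two_gt_d9]
      _ ≤ L := Real.log_le_log two_pos (by rw [le_div_iff₀ hε0]; linarith)
  set t := Real.log (((n : ℝ) / ℓ) * (1 + 4 * L)⁻¹) with ht_def
  have hℓn' : ℓ < Fintype.card (Fin n) := by rw [Fintype.card_fin]; omega
  refine (measure_mono (t := {ω | #{i | t < V i ω} ≤ ℓ})
    fun ω hω => card_lt_le_of_kthLargest_le hℓn' hω).trans ?_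
  rcases lt_or_ge t 0 with ht | ht
  · rw [measure_card_lt_le_eq_zero_of_measure_Iic hVmeas hexp
      (expMeasure_Iic_of_neg one_pos ht) hℓn']
    exact zero_le
  have hnp : n * Real.exp (-t) = ℓ * (1 + 4 * L) := by
    have hn : (0 : ℝ) < n := by exact_mod_cast (by omega : 0 < n)
    rw [ht_def, Real.exp_neg, Real.exp_log (by positivity)]
    field_simp
  refine (measure_card_lt_le_le_of_map_eq_expMeasure hVmeas hindep one_pos hexp ht ℓ).trans
    (ENNReal.ofReal_le_ofReal ?_)
  calc 2 ^ ℓ * (1 - Real.exp (-(1 * t)) / 2) ^ Fintype.card (Fin n) ≤ Real.exp (-L) := by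
        rw [one_mul, Fintype.card_fin]
        exact two_pow_mul_one_sub_half_pow_le_exp_neg hℓ hL
          ((Real.exp_le_one_iff.mpr (neg_nonpos.mpr ht)).trans one_le_two) hnp
    _ = ε / 3 := by rw [Real.exp_neg, Real.exp_log (by positivity), inv_div]
end

section
/- Let W₁,...,W_n be random variables and m ∈ {1,...,n}; suppose the signals are X_i = W_i + μ for i in a set H1 of size m and X_i = W_i for i in H0 = H1^c, with μ > 0. Let A and B be real numbers with P[|W_{H0,(ℓ+1)} - A| ≥ Δ] ≤ ε/3 and P[|W_{H1,(k-ℓ)} - B| ≥ Δ] ≤ ε/3, and suppose P[W_{H0,(ℓ+1)} ≤ μ + W_{H1,(k-ℓ)}] ≥ ε, where W_{T,(j)} denotes the j-th largest value in the index set T. Then μ ≥ A - B - 2Δ. -/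
open MeasureTheory

/-!
Union bound: if `μ < A - B - 2Δ`, a crossing `N ≤ μ + S` forces `N` to lie at least `Δ` from
`A` or `S` to lie at least `Δ` from `B`, an event of probability at most `2ε/3 < ε`.
-/

lemma crossing_subset_deviation_union {Ω : Type*} (N S : Ω → ℝ) {A B Δ μ : ℝ}
    (hμ : μ < A - B - 2 * Δ) :
    {ω | N ω ≤ μ + S ω} ⊆ {ω | Δ ≤ |N ω - A|} ∪ {ω | Δ ≤ |S ω - B|} := by
  intro ω hcross
  by_contra hnear
  simp only [Set.mem_union, Set.mem_ofPred_eq, not_or, not_le, abs_lt] at hcross hnear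
  linarith

lemma ENNReal.not_ofReal_le_ofReal_third_add_ofReal_third {ε : ℝ} (hε : 0 < ε) :
    ¬ ENNReal.ofReal ε ≤ ENNReal.ofReal (ε / 3) + ENNReal.ofReal (ε / 3) := by
  rw [← ENNReal.ofReal_add (by positivity) (by positivity),
    ENNReal.ofReal_le_ofReal_iff (by positivity)]
  linarith

lemma le_of_measure_crossing_of_measure_deviation {Ω : Type*} [MeasurableSpace Ω]
    (P : Measure Ω) (N S : Ω → ℝ) {A B Δ ε μ : ℝ} (hε : 0 < ε)
    (hdevN : P {ω | Δ ≤ |N ω - A|} ≤ ENNReal.ofReal (ε / 3))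
    (hdevS : P {ω | Δ ≤ |S ω - B|} ≤ ENNReal.ofReal (ε / 3))
    (hcross : ENNReal.ofReal ε ≤ P {ω | N ω ≤ μ + S ω}) :
    A - B - 2 * Δ ≤ μ := by
  by_contra! hμ
  refine ENNReal.not_ofReal_le_ofReal_third_add_ofReal_third hε ?_
  calc ENNReal.ofReal ε
      ≤ P {ω | N ω ≤ μ + S ω} := hcross
    _ ≤ P ({ω | Δ ≤ |N ω - A|} ∪ {ω | Δ ≤ |S ω - B|}) :=
        measure_mono (crossing_subset_deviation_union N S hμ)
    _ ≤ P {ω | Δ ≤ |N ω - A|} + P {ω | Δ ≤ |S ω - B|} := measure_union_le _ _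
    _ ≤ ENNReal.ofReal (ε / 3) + ENNReal.ofReal (ε / 3) := add_le_add hdevN hdevS

theorem location_model_signal_lower_bound_general {Ω : Type*} [MeasurableSpace Ω]
    (P : Measure Ω) {n : ℕ}
    (W : Fin n → Ω → ℝ)
    (H1 : Finset (Fin n)) (μ : ℝ)
    (k ℓ : ℕ) (A B Δ ε : ℝ) (hε : 0 < ε)
    (hconc0 : P {ω | Δ ≤ |kthLargest (H1ᶜ.val.map fun i => W i ω) (ℓ + 1) - A|} ≤
      ENNReal.ofReal (ε / 3))
    (hconc1 : P {ω | Δ ≤ |kthLargest (H1.val.map fun i => W i ω) (k - ℓ) - B|} ≤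
      ENNReal.ofReal (ε / 3))
    (hcross : ENNReal.ofReal ε ≤
      P {ω | kthLargest (H1ᶜ.val.map fun i => W i ω) (ℓ + 1) ≤
          μ + kthLargest (H1.val.map fun i => W i ω) (k - ℓ)}) :
    A - B - 2 * Δ ≤ μ :=
  le_of_measure_crossing_of_measure_deviation P _ _ hε hconc0 hconc1 hcross

/-- Derandomization for location models: a probability-`ε` crossing of the `(ℓ+1)`-th largest
null and the `μ`-shifted `(k-ℓ)`-th largest signal, combined with concentration of each order
statistic at scale `Δ` around `A` and `B`, yields `μ ≥ A - B - 2Δ`. -/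
theorem location_model_signal_lower_bound {Ω : Type*} [MeasurableSpace Ω]
    (P : Measure Ω) [IsProbabilityMeasure P] {n : ℕ}
    (W X : Fin n → Ω → ℝ) (m : ℕ) (hm1 : 1 ≤ m) (hmn : m ≤ n)
    (H1 : Finset (Fin n)) (hH1card : H1.card = m) (μ : ℝ) (hμ : 0 < μ)
    (hXsignal : ∀ i ∈ H1, ∀ ω, X i ω = W i ω + μ)
    (hXnull : ∀ i ∈ H1ᶜ, ∀ ω, X i ω = W i ω)
    (k ℓ : ℕ) (A B Δ ε : ℝ) (hΔ : 0 ≤ Δ) (hε : 0 < ε)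
    (hconc0 : P {ω | Δ ≤ |kthLargest (H1ᶜ.val.map fun i => W i ω) (ℓ + 1) - A|} ≤
      ENNReal.ofReal (ε / 3))
    (hconc1 : P {ω | Δ ≤ |kthLargest (H1.val.map fun i => W i ω) (k - ℓ) - B|} ≤
      ENNReal.ofReal (ε / 3))
    (hcross : ENNReal.ofReal ε ≤
      P {ω | kthLargest (H1ᶜ.val.map fun i => W i ω) (ℓ + 1) ≤
          μ + kthLargest (H1.val.map fun i => W i ω) (k - ℓ)}) :
    A - B - 2 * Δ ≤ μ :=
  location_model_signal_lower_bound_general P W H1 μ k ℓ A B Δ ε hε hconc0 hconc1 hcross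
end
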